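/- Let 𝔄 be a C*-algebra, let A, B, E be 𝔄-C*-modules, and let θ: A → B be an E-nuclear c.c.p. module map. Let D ⊆ B be a C*-subalgebra and 𝔄-submodule with θ(A) ⊆ D, and suppose there exists a sequence of c.c.p. module maps 𝔼_n: B → D such that ‖𝔼_n(d) − d‖ → 0 for every d ∈ D. Then θ, regarded as a map from A to D, is E-nuclear. -/

import Mathlib

/-! Definitions for finite dimensional approximation properties of `𝔄`-`C*`-modules,
following Amini, "Finite dimensional approximation properties of C*-modules". -/

namespace CStarModulePaper

variable {𝔄 : Type*} [NonUnitalCStarAlgebra 𝔄]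

section Defs

variable {R S : Type*}
  [NonUnitalRing R] [StarRing R] [Module ℂ R]
  [NonUnitalRing S] [StarRing S] [Module ℂ S]

/-- An element of a matrix `*`-ring over a (subalgebra of a) C*-algebra is *positive*
iff it is of the form `Xᴴ * X`. -/
def MatIsPos {k : ℕ} (M : Matrix (Fin k) (Fin k) R) : Prop :=
  ∃ X : Matrix (Fin k) (Fin k) R, M = star X * X

/-- A map is *completely positive* if all its matrix amplifications preserve positivity. -/
def IsCompletelyPositive (φ : R → S) : Prop :=
  ∀ (k : ℕ) (M : Matrix (Fin k) (Fin k) R), MatIsPos M → MatIsPos (M.map φ)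

/-- A *bounded module map* between right `𝔄`-modules, with respect to the given norm
functions `nR`, `nS` and right `𝔄`-actions `actR`, `actS`: a bounded linear map
intertwining the actions. -/
structure IsBddModuleMap (nR : R → ℝ) (nS : S → ℝ)
    (actR : R → 𝔄 → R) (actS : S → 𝔄 → S) (φ : R → S) : Prop where
  map_add : ∀ a b, φ (a + b) = φ a + φ b
  map_smul : ∀ (c : ℂ) (a : R), φ (c • a) = c • φ a
  bounded : ∃ C : ℝ, ∀ a, nS (φ a) ≤ C * nR a
  map_act : ∀ (a : R) (α : 𝔄), φ (actR a α) = actS (φ a) α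

/-- A *completely positive module map*: a bounded module map which is completely positive. -/
structure IsCpModuleMap (nR : R → ℝ) (nS : S → ℝ)
    (actR : R → 𝔄 → R) (actS : S → 𝔄 → S) (φ : R → S) : Prop where
  map_add : ∀ a b, φ (a + b) = φ a + φ b
  map_smul : ∀ (c : ℂ) (a : R), φ (c • a) = c • φ a
  bounded : ∃ C : ℝ, ∀ a, nS (φ a) ≤ C * nR a
  cp : IsCompletelyPositive φ
  map_act : ∀ (a : R) (α : 𝔄), φ (actR a α) = actS (φ a) α

/-- A *c.c.p. module map*: a completely positive, contractive module map. -/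
structure IsCcpModuleMap (nR : R → ℝ) (nS : S → ℝ)
    (actR : R → 𝔄 → R) (actS : S → 𝔄 → S) (φ : R → S) : Prop where
  map_add : ∀ a b, φ (a + b) = φ a + φ b
  map_smul : ∀ (c : ℂ) (a : R), φ (c • a) = c • φ a
  cp : IsCompletelyPositive φ
  contractive : ∀ a, nS (φ a) ≤ nR a
  map_act : ∀ (a : R) (α : 𝔄), φ (actR a α) = actS (φ a) α

end Defs

/-- `act` is a compatible contractive right `𝔄`-action making the C*-algebra `A`
into an `𝔄`-C*-module. -/
structure IsCStarAction {A : Type*} [NonUnitalCStarAlgebra A]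
    (act : A → 𝔄 → A) : Prop where
  act_add_left : ∀ a b α, act (a + b) α = act a α + act b α
  act_add_right : ∀ a α β, act a (α + β) = act a α + act a β
  act_smul_left : ∀ (c : ℂ) a α, act (c • a) α = c • act a α
  act_smul_right : ∀ (c : ℂ) a α, act a (c • α) = c • act a α
  norm_act_le : ∀ a α, ‖act a α‖ ≤ ‖a‖ * ‖α‖
  star_act : ∀ a α, star (act a α) = act (star a) (star α)
  mul_act : ∀ a b α, act (a * b) α = a * act b α
  act_mul : ∀ a α β, act a (α * β) = act (act a α) β

/-- The (necessarily unique) C*-norm on the matrix algebra `Mₙ(E)` over a C*-algebra `E`,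
described intrinsically: `‖X‖ = √(spectral radius of Xᴴ * X)`, the spectrum being computed
(algebraically) in the unitization, i.e. via the quasispectrum. -/
noncomputable def matCStarNorm {E : Type*} [NonUnitalCStarAlgebra E] {n : ℕ}
    (X : Matrix (Fin n) (Fin n) E) : ℝ :=
  Real.sqrt (sSup {r : ℝ | ∃ z ∈ quasispectrum ℂ (star X * X), r = ‖z‖})

/-- The entrywise right `𝔄`-action on the matrix algebra `Mₙ(E)`. -/
def matAct {E : Type*} (actE : E → 𝔄 → E) {n : ℕ}
    (M : Matrix (Fin n) (Fin n) E) (α : 𝔄) : Matrix (Fin n) (Fin n) E :=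
  M.map (fun x => actE x α)

/-- A module map `θ` between (subalgebras of) `𝔄`-C*-modules is *`E`-nuclear* if it is
point-norm approximated by compositions of c.c.p. module maps through the matrix
algebras `Mₙ(E)`. -/
def IsENuclear {R S E : Type*}
    [NonUnitalRing R] [StarRing R] [Module ℂ R]
    [NonUnitalRing S] [StarRing S] [Module ℂ S]
    [NonUnitalCStarAlgebra E] (actE : E → 𝔄 → E)
    (nR : R → ℝ) (nS : S → ℝ) (actR : R → 𝔄 → R) (actS : S → 𝔄 → S)
    (θ : R → S) : Prop :=
  ∀ (F : Finset R) (ε : ℝ), 0 < ε →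
    ∃ n : ℕ, 1 ≤ n ∧
      ∃ (φ : R → Matrix (Fin n) (Fin n) E) (ψ : Matrix (Fin n) (Fin n) E → S),
        IsCcpModuleMap nR matCStarNorm actR (matAct actE) φ ∧
        IsCcpModuleMap matCStarNorm nS (matAct actE) actS ψ ∧
        ∀ a ∈ F, nS (ψ (φ a) - θ a) < ε

end CStarModulePaper

/-! Postcompose the approximate factorizations `A → Mₙ(E) → B` of `θ` with a single `𝔼ₘ`
that is `ε/2`-close to the identity on the finite set `θ(F) ⊆ D`. Since `𝔼ₘ` is a contractive
linear map, it enlarges the factorization error by at most `‖𝔼ₘ (θ a) - θ a‖`. -/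

namespace CStarModulePaper

section CcpModuleMap

variable {𝔄 R S T : Type*}
  [NonUnitalRing R] [StarRing R] [Module ℂ R]
  [NonUnitalRing S] [StarRing S] [Module ℂ S]
  [NonUnitalRing T] [StarRing T] [Module ℂ T]
  {nR : R → ℝ} {nS : S → ℝ} {nT : T → ℝ}
  {actR : R → 𝔄 → R} {actS : S → 𝔄 → S} {actT : T → 𝔄 → T}

theorem IsCcpModuleMap.comp {ψ : S → T} {φ : R → S}
    (hψ : IsCcpModuleMap nS nT actS actT ψ) (hφ : IsCcpModuleMap nR nS actR actS φ) :
    IsCcpModuleMap nR nT actR actT (ψ ∘ φ) where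
  map_add a b := by simp only [Function.comp_apply, hφ.map_add, hψ.map_add]
  map_smul c a := by simp only [Function.comp_apply, hφ.map_smul, hψ.map_smul]
  cp k M hM := by
    simpa only [Matrix.map_map] using hψ.cp k (M.map φ) (hφ.cp k M hM)
  contractive a := (hψ.contractive (φ a)).trans (hφ.contractive a)
  map_act a α := by simp only [Function.comp_apply, hφ.map_act, hψ.map_act]

theorem IsCcpModuleMap.map_sub {φ : R → S} (hφ : IsCcpModuleMap nR nS actR actS φ)
    (a b : R) : φ (a - b) = φ a - φ b :=
  (AddMonoidHom.mk' φ hφ.map_add).map_sub a b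

end CcpModuleMap

theorem IsCcpModuleMap.norm_map_sub_le {𝔄 S T : Type*}
    [NonUnitalNormedRing S] [StarRing S] [Module ℂ S]
    [NonUnitalNormedRing T] [StarRing T] [Module ℂ T]
    {actS : S → 𝔄 → S} {actT : T → 𝔄 → T} {φ : S → T}
    (hφ : IsCcpModuleMap (‖·‖) (‖·‖) actS actT φ) (a b : S) :
    ‖φ a - φ b‖ ≤ ‖a - b‖ :=
  hφ.map_sub a b ▸ hφ.contractive (a - b)

theorem IsENuclear.of_forall_exists_ccp_comp_approx {𝔄 R S T E : Type*}
    [NonUnitalRing R] [StarRing R] [Module ℂ R]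
    [NonUnitalNormedRing S] [StarRing S] [Module ℂ S]
    [NonUnitalNormedRing T] [StarRing T] [Module ℂ T] [NonUnitalCStarAlgebra E]
    {actE : E → 𝔄 → E} {nR : R → ℝ} {actR : R → 𝔄 → R} {actS : S → 𝔄 → S}
    {actT : T → 𝔄 → T} {θ : R → S} {θ' : R → T}
    (hθ : IsENuclear actE nR (‖·‖) actR actS θ)
    (hΦ : ∀ (F : Finset R) (ε : ℝ), 0 < ε → ∃ Φ : S → T,
      IsCcpModuleMap (‖·‖) (‖·‖) actS actT Φ ∧ ∀ a ∈ F, ‖Φ (θ a) - θ' a‖ < ε) :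
    IsENuclear actE nR (‖·‖) actR actT θ' := by
  intro F ε hε
  obtain ⟨n, hn, φ, ψ, hφ, hψ, hψφ⟩ := hθ F (ε / 2) (half_pos hε)
  obtain ⟨Φ, hΦ, hΦθ⟩ := hΦ F (ε / 2) (half_pos hε)
  refine ⟨n, hn, φ, Φ ∘ ψ, hφ, hΦ.comp hψ, fun a ha => ?_⟩
  calc ‖Φ (ψ (φ a)) - θ' a‖
      ≤ ‖Φ (ψ (φ a)) - Φ (θ a)‖ + ‖Φ (θ a) - θ' a‖ := norm_sub_le_norm_sub_add_norm_sub _ _ _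
    _ < ε / 2 + ε / 2 :=
        add_lt_add_of_le_of_lt ((hΦ.norm_map_sub_le _ _).trans (hψφ a ha).le) (hΦθ a ha)
    _ = ε := add_halves ε

end CStarModulePaper

open CStarModulePaper in
theorem enuclear_corestriction_of_approx_general {𝔄 A B E : Type*}
    [NonUnitalCStarAlgebra A] [NonUnitalCStarAlgebra B] [NonUnitalCStarAlgebra E]
    (actA : A → 𝔄 → A) (actB : B → 𝔄 → B) (actE : E → 𝔄 → E)
    (θ : A → B)
    (hnuc : IsENuclear actE (fun a : A => ‖a‖) (fun b : B => ‖b‖) actA actB θ)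
    (D : NonUnitalStarSubalgebra ℂ B)
    (actD : D → 𝔄 → D)
    (θ' : A → D) (hθ' : ∀ a : A, (θ' a : B) = θ a)
    (𝔼 : ℕ → B → D)
    (h𝔼 : ∀ n : ℕ,
      IsCcpModuleMap (fun b : B => ‖b‖) (fun d : D => ‖(d : B)‖) actB actD (𝔼 n))
    (h𝔼lim : ∀ d : D,
      Filter.Tendsto (fun n : ℕ => ‖((𝔼 n (d : B) : D) : B) - (d : B)‖)
        Filter.atTop (nhds 0)) :
    IsENuclear actE (fun a : A => ‖a‖) (fun d : D => ‖(d : B)‖) actA actD θ' := by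
  refine IsENuclear.of_forall_exists_ccp_comp_approx hnuc fun F ε hε => ?_
  have hev : ∀ᶠ m in Filter.atTop, ∀ a ∈ F, ‖((𝔼 m (θ' a) : D) : B) - θ' a‖ < ε :=
    (Filter.eventually_all_finset F).2 fun a _ => (h𝔼lim (θ' a)).eventually_lt_const hε
  obtain ⟨m, hm⟩ := hev.exists
  exact ⟨𝔼 m, h𝔼 m, fun a ha => by rw [← hθ' a]; exact hm a ha⟩

open CStarModulePaper in
/-- **dependence on range, via approximating c.c.p. maps.** If `θ : A → B` is
an `E`-nuclear c.c.p. module map, `D ⊆ B` is a C*-subalgebra and `𝔄`-submodule with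
`θ(A) ⊆ D`, and there is a sequence of c.c.p. module maps `𝔼ₙ : B → D` converging to the
identity of `D` in the point-norm topology, then `θ : A → D` is `E`-nuclear. -/
theorem enuclear_corestriction_of_approx {𝔄 A B E : Type*} [NonUnitalCStarAlgebra 𝔄]
    [NonUnitalCStarAlgebra A] [NonUnitalCStarAlgebra B] [NonUnitalCStarAlgebra E]
    (actA : A → 𝔄 → A) (actB : B → 𝔄 → B) (actE : E → 𝔄 → E)
    (hA : IsCStarAction actA) (hB : IsCStarAction actB) (hE : IsCStarAction actE)
    (θ : A → B)
    (hθ : IsCcpModuleMap (fun a : A => ‖a‖) (fun b : B => ‖b‖) actA actB θ)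
    (hnuc : IsENuclear actE (fun a : A => ‖a‖) (fun b : B => ‖b‖) actA actB θ)
    (D : NonUnitalStarSubalgebra ℂ B) (hDclosed : IsClosed (D : Set B))
    (actD : D → 𝔄 → D) (hactD : ∀ (d : D) (α : 𝔄), (actD d α : B) = actB (d : B) α)
    (θ' : A → D) (hθ' : ∀ a : A, (θ' a : B) = θ a)
    (𝔼 : ℕ → B → D)
    (h𝔼 : ∀ n : ℕ,
      IsCcpModuleMap (fun b : B => ‖b‖) (fun d : D => ‖(d : B)‖) actB actD (𝔼 n))
    (h𝔼lim : ∀ d : D,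
      Filter.Tendsto (fun n : ℕ => ‖((𝔼 n (d : B) : D) : B) - (d : B)‖)
        Filter.atTop (nhds 0)) :
    IsENuclear actE (fun a : A => ‖a‖) (fun d : D => ‖(d : B)‖) actA actD θ' :=
  enuclear_corestriction_of_approx_general actA actB actE θ hnuc D actD θ' hθ' 𝔼 h𝔼 h𝔼lim
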